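/- Fix σ > 0. For each δ > 0 let θ(δ) ∈ (0, σ] and define the distortion D(δ) = Σ_{k=0}^∞ min(θ(δ)², σ² e^{−(2k+1)δ}) and the rate (in nats) R(δ) = Σ_{k=0}^∞ max(0, (1/2)·ln(σ² e^{−(2k+1)δ}/θ(δ)²)). Assume liminf_{δ→0+} δ·D(δ) > 0. Then D(δ)/((coth δ/2)·σ²) ∈ (0,1] for every δ > 0, and R(δ)/coth δ − (1/2)·[w₋₁(D(δ)/((coth δ/2)·σ²))]² → 0 as δ → 0+. -/

import Mathlib

open Real Filter Set Topology

/-!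
Write `θ² = σ² e^{-s}`. Exactly `n = ⌈(s - δ) / (2δ)⌉₊` components lie above the water level, so
`D = σ² (n e^{-s} + e^{-2nδ} / (2 sinh δ))` and `R = n (s - nδ) / 2`, and `u = nδ` satisfies
`|s - 2u| ≤ δ`. Hence, as `δ → 0+`, the normalized distortion is `f u + o(1)` with
`f x = (2x + 1) e^{-2x}`, and `R tanh δ = u² / 2 + o(1)` as long as `u` stays bounded. The liminf
hypothesis keeps the normalized distortion, hence `f u`, away from `0`, which bounds `u`; on a
bounded interval `f` has the inverse modulus `2 (x - y)² ≤ e^{2M} |f x - f y|`, so `w₋₁` of the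
normalized distortion is `u + o(1)`.
-/

noncomputable def distortionProfile (x : ℝ) : ℝ := (2 * x + 1) * exp (-(2 * x))

lemma mul_distortionProfile_le_one {x : ℝ} (hx : 0 ≤ x) : x * distortionProfile x ≤ 1 := by
  have hq := quadratic_le_exp_of_nonneg (by positivity : 0 ≤ 2 * x)
  calc x * distortionProfile x = x * (2 * x + 1) * exp (-(2 * x)) := by
        rw [distortionProfile, mul_assoc]
    _ ≤ exp (2 * x) * exp (-(2 * x)) := by gcongr; nlinarith
    _ = 1 := by rw [← exp_add, add_neg_cancel, exp_zero]

lemma le_inv_of_le_distortionProfile {c x : ℝ} (hc : 0 < c) (hx : 0 ≤ x)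
    (h : c ≤ distortionProfile x) : x ≤ c⁻¹ := by
  rw [← one_div, le_div_iff₀ hc]
  exact (mul_le_mul_of_nonneg_left h hx).trans (mul_distortionProfile_le_one hx)

lemma two_mul_sq_sub_mul_exp_le_distortionProfile_sub {a b : ℝ} (ha : 0 ≤ a) (hab : a ≤ b) :
    2 * (b - a) ^ 2 * exp (-(2 * b)) ≤ distortionProfile a - distortionProfile b := by
  have hq := quadratic_le_exp_of_nonneg (by linarith : 0 ≤ 2 * (b - a))
  have hsplit : exp (-(2 * a)) = exp (2 * (b - a)) * exp (-(2 * b)) := by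
    rw [← exp_add]; ring_nf
  have he := exp_pos (-(2 * b))
  rw [distortionProfile, distortionProfile, hsplit]
  nlinarith [mul_le_mul_of_nonneg_right hq (by positivity : 0 ≤ (2 * a + 1) * exp (-(2 * b))),
    mul_nonneg (mul_nonneg ha (sub_nonneg.2 hab)) he.le]

lemma two_mul_sq_sub_le_exp_mul_abs_distortionProfile_sub {M x y : ℝ} (hx : x ∈ Icc 0 M)
    (hy : y ∈ Icc 0 M) :
    2 * (x - y) ^ 2 ≤ exp (2 * M) * |distortionProfile x - distortionProfile y| := by
  wlog hxy : x ≤ y generalizing x y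
  · rw [abs_sub_comm, ← neg_sub, neg_sq]
    exact this hy hx (le_of_not_ge hxy)
  have h := two_mul_sq_sub_mul_exp_le_distortionProfile_sub hx.1 hxy
  calc 2 * (x - y) ^ 2 = 2 * (y - x) ^ 2 * exp (-(2 * y)) * exp (2 * y) := by
        rw [mul_assoc _ (exp _), ← exp_add, neg_add_cancel, exp_zero]; ring
    _ ≤ |distortionProfile x - distortionProfile y| * exp (2 * M) := by
        gcongr
        · exact h.trans (le_abs_self _)
        · exact hy.2
    _ = _ := mul_comm _ _

lemma tendsto_sub_of_tendsto_distortionProfile_sub {α : Type*} {l : Filter α} {x y : α → ℝ}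
    {M : ℝ} (hx : ∀ᶠ a in l, x a ∈ Icc 0 M) (hy : ∀ᶠ a in l, y a ∈ Icc 0 M)
    (h : Tendsto (fun a => distortionProfile (x a) - distortionProfile (y a)) l (𝓝 0)) :
    Tendsto (fun a => x a - y a) l (𝓝 0) := by
  have hbound : Tendsto (fun a => √(exp (2 * M) * |distortionProfile (x a) -
      distortionProfile (y a)| / 2)) l (𝓝 0) := by
    simpa using ((h.abs.const_mul (exp (2 * M))).div_const 2).sqrt
  refine squeeze_zero_norm' ?_ hbound
  filter_upwards [hx, hy] with a hxa hya
  rw [Real.norm_eq_abs]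
  exact abs_le_sqrt (by linarith [two_mul_sq_sub_le_exp_mul_abs_distortionProfile_sub hxa hya])

noncomputable def waterIndex (s δ : ℝ) : ℕ := ⌈(s - δ) / (2 * δ)⌉₊

/-- Reverse water-filling at level `e^{-s}` for the variances `e^{-(2k+1)δ}`, i.e. with `σ = 1`. -/
noncomputable def waterDistortion (s δ : ℝ) : ℝ :=
  ∑' k : ℕ, min (exp (-s)) (exp (-((2 * k + 1) * δ)))

noncomputable def waterRate (s δ : ℝ) : ℝ := ∑' k : ℕ, max 0 ((s - (2 * k + 1) * δ) / 2)

section WaterFilling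

variable {s δ : ℝ}

lemma lt_waterIndex_iff (hδ : 0 < δ) {k : ℕ} : k < waterIndex s δ ↔ (2 * k + 1) * δ < s := by
  rw [waterIndex, Nat.lt_ceil, lt_div_iff₀ (by positivity)]
  constructor <;> intro h <;> linarith

lemma abs_sub_two_mul_waterIndex_mul_le (hs : 0 ≤ s) (hδ : 0 < δ) :
    |s - 2 * (waterIndex s δ * δ)| ≤ δ := by
  have hle : s ≤ (2 * waterIndex s δ + 1) * δ :=
    not_lt.1 ((lt_waterIndex_iff hδ).not.1 (lt_irrefl _))
  refine abs_le.2 ⟨?_, by linarith⟩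
  cases h : waterIndex s δ with
  | zero => simpa using hs.trans' (neg_nonpos.2 hδ.le)
  | succ m =>
    have := (lt_waterIndex_iff hδ).1 (by omega : m < waterIndex s δ)
    push_cast
    linarith

lemma hasSum_exp_neg_odd_mul (hδ : 0 < δ) :
    HasSum (fun k : ℕ => exp (-((2 * k + 1) * δ))) (2 * sinh δ)⁻¹ := by
  have hr : exp (-(2 * δ)) < 1 := exp_lt_one_iff.2 (by linarith)
  have hsinh : 2 * sinh δ = exp δ * (1 - exp (-(2 * δ))) := by
    rw [sinh_eq, mul_sub, ← exp_add]; ring_nf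
  rw [hsinh, mul_inv, ← exp_neg]
  refine ((hasSum_geometric_of_lt_one (exp_pos _).le hr).mul_left (exp (-δ))).congr_fun
    fun k => ?_
  rw [← exp_nat_mul, ← exp_add]
  ring_nf

lemma summable_waterDistortion (hδ : 0 < δ) :
    Summable (fun k : ℕ => min (exp (-s)) (exp (-((2 * k + 1) * δ)))) :=
  (hasSum_exp_neg_odd_mul hδ).summable.of_nonneg_of_le (fun _ => by positivity)
    (fun _ => min_le_right _ _)

lemma waterDistortion_le (hδ : 0 < δ) : waterDistortion s δ ≤ (2 * sinh δ)⁻¹ :=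
  hasSum_le (fun _ => min_le_right _ _) (summable_waterDistortion hδ).hasSum
    (hasSum_exp_neg_odd_mul hδ)

lemma waterDistortion_eq (hδ : 0 < δ) :
    waterDistortion s δ = waterIndex s δ * exp (-s) +
      exp (-(2 * (waterIndex s δ * δ))) / (2 * sinh δ) := by
  set n := waterIndex s δ
  have htail : HasSum (fun k => min (exp (-s)) (exp (-((2 * ((k + n : ℕ) : ℝ) + 1) * δ))))
      (exp (-(2 * (n * δ))) * (2 * sinh δ)⁻¹) := by
    refine ((hasSum_exp_neg_odd_mul hδ).mul_left _).congr_fun fun k => ?_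
    have hk : s ≤ (2 * ((k + n : ℕ) : ℝ) + 1) * δ :=
      not_lt.1 fun h => (lt_waterIndex_iff hδ).2 h |>.not_ge (Nat.le_add_left n k)
    rw [min_eq_right (exp_le_exp.2 (by linarith)), ← exp_add]
    push_cast
    ring_nf
  have hfull := (hasSum_nat_add_iff
    (f := fun k : ℕ => min (exp (-s)) (exp (-((2 * (k : ℝ) + 1) * δ)))) n).1 htail
  have hwet : ∀ k ∈ Finset.range n, min (exp (-s)) (exp (-((2 * k + 1) * δ))) = exp (-s) :=
    fun k hk => min_eq_left <| exp_le_exp.2 <| neg_le_neg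
      ((lt_waterIndex_iff hδ).1 (Finset.mem_range.1 hk)).le
  rw [waterDistortion, hfull.tsum_eq, Finset.sum_congr rfl hwet, Finset.sum_const,
    Finset.card_range, nsmul_eq_mul, div_eq_mul_inv, add_comm]

lemma waterRate_eq (hδ : 0 < δ) :
    waterRate s δ = waterIndex s δ * (s - waterIndex s δ * δ) / 2 := by
  set n := waterIndex s δ
  have hsum : ∀ m : ℕ, ∑ k ∈ Finset.range m, (s - (2 * k + 1) * δ) / 2 = m * (s - m * δ) / 2 := by
    intro m
    induction m with
    | zero => simp
    | succ m ih => rw [Finset.sum_range_succ, ih]; push_cast; ring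
  have hdry : ∀ k ∉ Finset.range n, max 0 ((s - (2 * k + 1) * δ) / 2) = 0 := fun k hk =>
    max_eq_left <| div_nonpos_of_nonpos_of_nonneg (sub_nonpos.2 <| not_lt.1 <|
      (lt_waterIndex_iff hδ).not.1 (Finset.mem_range.not.1 hk)) two_pos.le
  have hwet : ∀ k ∈ Finset.range n, max 0 ((s - (2 * k + 1) * δ) / 2) = (s - (2 * k + 1) * δ) / 2 :=
    fun k hk => max_eq_right <| div_nonneg (sub_nonneg.2
      ((lt_waterIndex_iff hδ).1 (Finset.mem_range.1 hk)).le) two_pos.le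
  rw [waterRate, tsum_eq_sum hdry, Finset.sum_congr rfl hwet, hsum]

lemma waterDistortion_pos (hδ : 0 < δ) : 0 < waterDistortion s δ := by
  rw [waterDistortion_eq hδ]
  exact add_pos_of_nonneg_of_pos (by positivity)
    (div_pos (exp_pos _) (mul_pos two_pos (sinh_pos_iff.2 hδ)))

lemma two_mul_tanh_mul_waterDistortion_mem_Ioc (hδ : 0 < δ) :
    2 * tanh δ * waterDistortion s δ ∈ Ioc 0 1 := by
  have hsinh : 0 < sinh δ := sinh_pos_iff.2 hδ
  have hpos : 0 < waterDistortion s δ := waterDistortion_pos hδ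
  rw [tanh_eq_sinh_div_cosh]
  refine ⟨by have := cosh_pos δ; positivity, ?_⟩
  calc 2 * (sinh δ / cosh δ) * waterDistortion s δ
      ≤ 2 * (sinh δ / cosh δ) * (2 * sinh δ)⁻¹ := by
        gcongr
        exact waterDistortion_le hδ
    _ = (cosh δ)⁻¹ := by field_simp
    _ ≤ 1 := inv_le_one_of_one_le₀ (one_le_cosh δ)

end WaterFilling

lemma tendsto_tanh_div_self : Tendsto (fun δ => tanh δ / δ) (𝓝[>] 0) (𝓝 1) := by
  have hsinh := (hasDerivAt_sinh 0).tendsto_slope_zero_right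
  have hcosh : Tendsto cosh (𝓝[>] 0) (𝓝 1) := by
    simpa using (continuous_cosh.tendsto 0).mono_left nhdsWithin_le_nhds
  simp only [zero_add, sinh_zero, sub_zero, smul_eq_mul, cosh_zero] at hsinh
  have h := hsinh.div hcosh one_ne_zero
  rw [div_one] at h
  exact h.congr fun δ => by rw [Pi.div_apply, tanh_eq_sinh_div_cosh]; ring

lemma exists_pos_eventually_le_tanh_mul {g : ℝ → ℝ} (hg0 : ∀ᶠ δ in 𝓝[>] 0, 0 ≤ g δ)
    (hg : 0 < liminf (fun δ => δ * g δ) (𝓝[>] 0)) :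
    ∃ c > 0, ∀ᶠ δ in 𝓝[>] 0, c ≤ tanh δ * g δ := by
  have hbdd : IsBoundedUnder (· ≥ ·) (𝓝[>] 0) (fun δ => δ * g δ) := by
    refine isBoundedUnder_of_eventually_ge (a := 0) ?_
    filter_upwards [self_mem_nhdsWithin, hg0] with δ (hδ : 0 < δ) hgδ
    exact mul_nonneg hδ.le hgδ
  refine ⟨liminf (fun δ => δ * g δ) (𝓝[>] 0) / 4, by positivity, ?_⟩
  filter_upwards [self_mem_nhdsWithin, hg0, eventually_lt_of_lt_liminf (half_lt_self hg) hbdd,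
    tendsto_tanh_div_self.eventually_const_lt one_half_lt_one] with δ (hδ : 0 < δ) hgδ hlim hτ
  have : tanh δ * g δ = tanh δ / δ * (δ * g δ) := by field_simp
  rw [this]
  nlinarith

section Asymptotics

variable (s : ℝ → ℝ)

lemma tendsto_two_mul_tanh_mul_waterDistortion_sub (hs : ∀ δ > 0, 0 ≤ s δ) :
    Tendsto (fun δ => 2 * tanh δ * waterDistortion (s δ) δ -
      distortionProfile (waterIndex (s δ) δ * δ)) (𝓝[>] 0) (𝓝 0) := by
  set u : ℝ → ℝ := fun δ => waterIndex (s δ) δ * δ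
  have he : Tendsto (fun δ => s δ - 2 * u δ) (𝓝[>] 0) (𝓝 0) := by
    refine squeeze_zero_norm' ?_ (tendsto_id.mono_left nhdsWithin_le_nhds)
    filter_upwards [self_mem_nhdsWithin] with δ (hδ : 0 < δ)
    exact abs_sub_two_mul_waterIndex_mul_le (hs δ hδ) hδ
  have hA : Tendsto (fun δ => tanh δ / δ * exp (-(s δ - 2 * u δ)) - 1) (𝓝[>] 0) (𝓝 0) := by
    simpa using (tendsto_tanh_div_self.mul he.neg.rexp).sub_const 1
  have hB : Tendsto (fun δ => (cosh δ)⁻¹ - 1) (𝓝[>] 0) (𝓝 0) := by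
    simpa using ((continuous_cosh.tendsto 0).mono_left nhdsWithin_le_nhds).inv₀ (by simp)
      |>.sub_const 1
  -- `2u e^{-2u} ≤ 1` makes the estimate uniform in `u`.
  refine squeeze_zero_norm' ?_ (by simpa only [abs_zero, add_zero] using hA.abs.add hB.abs)
  filter_upwards [self_mem_nhdsWithin] with δ (hδ : 0 < δ)
  have hu : 0 ≤ u δ := mul_nonneg (Nat.cast_nonneg _) hδ.le
  have hu₁ : 2 * u δ * exp (-(2 * u δ)) ≤ 1 :=
    (mul_exp_neg_le_exp_neg_one _).trans (exp_le_one_iff.2 (by norm_num))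
  have hu₂ : exp (-(2 * u δ)) ≤ 1 := exp_le_one_iff.2 (by linarith)
  have hsplit : 2 * tanh δ * waterDistortion (s δ) δ - distortionProfile (u δ) =
      2 * u δ * exp (-(2 * u δ)) * (tanh δ / δ * exp (-(s δ - 2 * u δ)) - 1) +
      exp (-(2 * u δ)) * ((cosh δ)⁻¹ - 1) := by
    have hexp : exp (-s δ) = exp (-(2 * u δ)) * exp (-(s δ - 2 * u δ)) := by
      rw [← exp_add]; ring_nf
    have := hδ.ne'
    have := (sinh_pos_iff.2 hδ).ne'
    have := (cosh_pos δ).ne'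
    rw [waterDistortion_eq hδ, tanh_eq_sinh_div_cosh, distortionProfile, hexp]
    simp only [u]
    field_simp
    ring
  rw [Real.norm_eq_abs, hsplit]
  calc _ ≤ |2 * u δ * exp (-(2 * u δ)) * (tanh δ / δ * exp (-(s δ - 2 * u δ)) - 1)| +
        |exp (-(2 * u δ)) * ((cosh δ)⁻¹ - 1)| := abs_add_le _ _
    _ ≤ _ := by
      rw [abs_mul, abs_mul (exp _), abs_of_nonneg (by positivity), abs_of_pos (exp_pos _)]
      exact add_le_add (mul_le_of_le_one_left (abs_nonneg _) hu₁)
        (mul_le_of_le_one_left (abs_nonneg _) hu₂)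

lemma tendsto_tanh_mul_waterRate_sub (hs : ∀ δ > 0, 0 ≤ s δ) {M : ℝ}
    (hM : ∀ᶠ δ in 𝓝[>] 0, waterIndex (s δ) δ * δ ≤ M) :
    Tendsto (fun δ => tanh δ * waterRate (s δ) δ - (waterIndex (s δ) δ * δ) ^ 2 / 2)
      (𝓝[>] 0) (𝓝 0) := by
  set u : ℝ → ℝ := fun δ => waterIndex (s δ) δ * δ
  have hbound : Tendsto (fun δ => |tanh δ / δ - 1| * M ^ 2 / 2 + |tanh δ / δ| * M * δ / 2)
      (𝓝[>] 0) (𝓝 0) := by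
    have hid : Tendsto (fun δ : ℝ => δ) (𝓝[>] 0) (𝓝 0) := tendsto_id.mono_left nhdsWithin_le_nhds
    simpa using ((tendsto_tanh_div_self.sub_const 1).abs.mul_const (M ^ 2)).div_const 2 |>.add
      ((tendsto_tanh_div_self.abs.mul_const M).mul hid |>.div_const 2)
  refine squeeze_zero_norm' ?_ hbound
  filter_upwards [self_mem_nhdsWithin, hM] with δ (hδ : 0 < δ) huM
  have hu : 0 ≤ u δ := mul_nonneg (Nat.cast_nonneg _) hδ.le
  have he := abs_sub_two_mul_waterIndex_mul_le (hs δ hδ) hδ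
  have hsplit : tanh δ * waterRate (s δ) δ - u δ ^ 2 / 2 =
      (tanh δ / δ - 1) * u δ ^ 2 / 2 + tanh δ / δ * u δ * (s δ - 2 * u δ) / 2 := by
    have := hδ.ne'
    rw [waterRate_eq hδ]
    simp only [u]
    field_simp
    ring
  rw [Real.norm_eq_abs, hsplit]
  calc _ ≤ |(tanh δ / δ - 1) * u δ ^ 2 / 2| + |tanh δ / δ * u δ * (s δ - 2 * u δ) / 2| :=
        abs_add_le _ _
    _ = |tanh δ / δ - 1| * u δ ^ 2 / 2 + |tanh δ / δ| * u δ * |s δ - 2 * u δ| / 2 := by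
        simp only [abs_div, abs_mul, abs_two, abs_pow, abs_of_nonneg hu]
    _ ≤ _ := by
        gcongr
        exact mul_nonneg (abs_nonneg _) (hu.trans huM)

lemma tendsto_tanh_mul_waterRate_sub_half_sq (hs : ∀ δ > 0, 0 ≤ s δ) {w : ℝ → ℝ}
    (hw : ∀ y ∈ Ioc (0 : ℝ) 1, 0 ≤ w y ∧ distortionProfile (w y) = y) {c : ℝ} (hc : 0 < c)
    (hcy : ∀ᶠ δ in 𝓝[>] 0, c ≤ 2 * tanh δ * waterDistortion (s δ) δ) :
    Tendsto (fun δ => tanh δ * waterRate (s δ) δ -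
      1 / 2 * w (2 * tanh δ * waterDistortion (s δ) δ) ^ 2) (𝓝[>] 0) (𝓝 0) := by
  set y : ℝ → ℝ := fun δ => 2 * tanh δ * waterDistortion (s δ) δ
  set u : ℝ → ℝ := fun δ => waterIndex (s δ) δ * δ
  have hyu := tendsto_two_mul_tanh_mul_waterDistortion_sub s hs
  have hu : ∀ᶠ δ in 𝓝[>] 0, u δ ∈ Icc 0 (2 / c) := by
    filter_upwards [self_mem_nhdsWithin, hcy, hyu.eventually_lt_const (half_pos hc)]
      with δ (hδ : 0 < δ) hcδ hyuδ
    have hu0 : 0 ≤ u δ := mul_nonneg (Nat.cast_nonneg _) hδ.le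
    refine ⟨hu0, ?_⟩
    simpa using le_inv_of_le_distortionProfile (half_pos hc) hu0 (by linarith)
  have hx : ∀ᶠ δ in 𝓝[>] 0, w (y δ) ∈ Icc 0 (2 / c) := by
    filter_upwards [self_mem_nhdsWithin, hcy] with δ (hδ : 0 < δ) hcδ
    obtain ⟨hw0, hwy⟩ := hw _ (two_mul_tanh_mul_waterDistortion_mem_Ioc hδ)
    refine ⟨hw0, (le_inv_of_le_distortionProfile hc hw0 (hwy.symm ▸ hcδ)).trans ?_⟩
    rw [inv_eq_one_div]
    gcongr
    norm_num
  have hxu : Tendsto (fun δ => w (y δ) - u δ) (𝓝[>] 0) (𝓝 0) := by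
    refine tendsto_sub_of_tendsto_distortionProfile_sub hx hu (hyu.congr' ?_)
    filter_upwards [self_mem_nhdsWithin] with δ (hδ : 0 < δ)
    rw [(hw _ (two_mul_tanh_mul_waterDistortion_mem_Ioc hδ)).2]
  have hr := tendsto_tanh_mul_waterRate_sub s hs (hu.mono fun _ h => h.2)
  refine squeeze_zero_norm' ?_ (by simpa using hr.abs.add (hxu.abs.mul_const (2 / c)))
  filter_upwards [hu, hx] with δ hδu hδx
  have hmean : |(w (y δ) + u δ) / 2| ≤ 2 / c := by
    rw [abs_of_nonneg (by linarith [hδu.1, hδx.1])]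
    linarith [hδu.2, hδx.2]
  calc ‖tanh δ * waterRate (s δ) δ - 1 / 2 * w (y δ) ^ 2‖
      = |(tanh δ * waterRate (s δ) δ - u δ ^ 2 / 2) - (w (y δ) - u δ) * ((w (y δ) + u δ) / 2)| := by
        rw [Real.norm_eq_abs]; ring_nf
    _ ≤ |tanh δ * waterRate (s δ) δ - u δ ^ 2 / 2| + |w (y δ) - u δ| * (2 / c) := by
        refine (abs_sub _ _).trans (add_le_add_right ?_ _)
        rw [abs_mul]
        gcongr

end Asymptotics

section Normalization

variable {σ θ : ℝ} (δ : ℝ)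

lemma mul_exp_neg_log_div {a b : ℝ} (ha : 0 < a) (hb : 0 < b) : a * exp (-log (a / b)) = b := by
  rw [exp_neg, exp_log (div_pos ha hb)]
  field_simp

lemma tsum_min_sq_eq (hσ : σ ≠ 0) (hθ : θ ≠ 0) :
    ∑' k : ℕ, min (θ ^ 2) (σ ^ 2 * exp (-((2 * (k : ℝ) + 1) * δ))) =
      σ ^ 2 * waterDistortion (log (σ ^ 2 / θ ^ 2)) δ := by
  set s := log (σ ^ 2 / θ ^ 2) with hs
  rw [← mul_exp_neg_log_div (by positivity : 0 < σ ^ 2) (by positivity : 0 < θ ^ 2), ← hs,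
    waterDistortion, ← tsum_mul_left]
  exact tsum_congr fun k => (mul_min_of_nonneg _ _ (sq_nonneg σ)).symm

lemma tsum_max_half_log_eq (hσ : σ ≠ 0) (hθ : θ ≠ 0) :
    ∑' k : ℕ, max 0 ((1 / 2) * log (σ ^ 2 * exp (-((2 * (k : ℝ) + 1) * δ)) / θ ^ 2)) =
      waterRate (log (σ ^ 2 / θ ^ 2)) δ := by
  set s := log (σ ^ 2 / θ ^ 2) with hs
  rw [← mul_exp_neg_log_div (by positivity : 0 < σ ^ 2) (by positivity : 0 < θ ^ 2), ← hs,
    waterRate]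
  refine tsum_congr fun k => ?_
  rw [mul_div_mul_left _ _ (by positivity), ← exp_sub, log_exp]
  ring_nf

end Normalization

theorem rate_distortion_closed_form
    (σ : ℝ) (hσ : 0 < σ)
    (θ : ℝ → ℝ) (hθ : ∀ δ > 0, θ δ ∈ Set.Ioc 0 σ)
    (wNeg1 : ℝ → ℝ)
    (hw_right : ∀ y ∈ Set.Ioc (0 : ℝ) 1,
      0 ≤ wNeg1 y ∧ (2 * wNeg1 y + 1) * Real.exp (-(2 * wNeg1 y)) = y)
    (D R : ℝ → ℝ)
    (hD : ∀ δ > 0, D δ =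
      ∑' k : ℕ, min (θ δ ^ 2) (σ ^ 2 * Real.exp (-((2 * (k : ℝ) + 1) * δ))))
    (hR : ∀ δ > 0, R δ =
      ∑' k : ℕ, max 0 ((1 / 2) *
        Real.log (σ ^ 2 * Real.exp (-((2 * (k : ℝ) + 1) * δ)) / θ δ ^ 2)))
    (hliminf : 0 < Filter.liminf (fun δ : ℝ => δ * D δ) (nhdsWithin 0 (Set.Ioi 0))) :
    (∀ δ > 0, D δ / ((Real.cosh δ / Real.sinh δ / 2) * σ ^ 2) ∈ Set.Ioc (0 : ℝ) 1) ∧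
    Filter.Tendsto
      (fun δ : ℝ =>
        R δ / (Real.cosh δ / Real.sinh δ) -
          (1 / 2) * (wNeg1 (D δ / ((Real.cosh δ / Real.sinh δ / 2) * σ ^ 2))) ^ 2)
      (nhdsWithin 0 (Set.Ioi 0)) (nhds 0) := by
  set s : ℝ → ℝ := fun δ => log (σ ^ 2 / θ δ ^ 2)
  have hs : ∀ δ > 0, 0 ≤ s δ := fun δ hδ => log_nonneg <| (one_le_div (pow_pos (hθ δ hδ).1 2)).2 <|
    pow_le_pow_left₀ (hθ δ hδ).1.le (hθ δ hδ).2 2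
  have hDs : ∀ δ > 0, D δ = σ ^ 2 * waterDistortion (s δ) δ := fun δ hδ =>
    (hD δ hδ).trans (tsum_min_sq_eq δ hσ.ne' (hθ δ hδ).1.ne')
  have hy : ∀ δ > 0, D δ / ((cosh δ / sinh δ / 2) * σ ^ 2) =
      2 * tanh δ * waterDistortion (s δ) δ := fun δ hδ => by
    have := (sinh_pos_iff.2 hδ).ne'
    rw [hDs δ hδ, tanh_eq_sinh_div_cosh]
    field_simp
  have hr : ∀ δ > 0, R δ / (cosh δ / sinh δ) = tanh δ * waterRate (s δ) δ := fun δ hδ => by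
    rw [hR δ hδ, tsum_max_half_log_eq δ hσ.ne' (hθ δ hδ).1.ne', tanh_eq_sinh_div_cosh]
    field_simp
    rfl
  refine ⟨fun δ hδ => hy δ hδ ▸ two_mul_tanh_mul_waterDistortion_mem_Ioc hδ, ?_⟩
  obtain ⟨c, hc, hcD⟩ := exists_pos_eventually_le_tanh_mul (eventually_nhdsWithin_of_forall
    fun δ (hδ : 0 < δ) => (hDs δ hδ).symm ▸ mul_nonneg (sq_nonneg σ) (waterDistortion_pos hδ).le)
    hliminf
  have hcy : ∀ᶠ δ in 𝓝[>] 0, 2 * c / σ ^ 2 ≤ 2 * tanh δ * waterDistortion (s δ) δ := by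
    filter_upwards [hcD, self_mem_nhdsWithin] with δ hcδ (hδ : 0 < δ)
    rw [hDs δ hδ] at hcδ
    rw [div_le_iff₀ (pow_pos hσ 2)]
    linarith
  refine (tendsto_tanh_mul_waterRate_sub_half_sq s hs hw_right (by positivity) hcy).congr' ?_
  filter_upwards [self_mem_nhdsWithin] with δ (hδ : 0 < δ)
  rw [hy δ hδ, hr δ hδ]
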